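/- Let μ be a probability measure on ℝ^m and let α, β be probability measures on ℝ^m × ℝ^d with finite second moments whose first marginals both equal μ, with disintegrations (α_y) and (β_y) with respect to μ. Let γ be a coupling of α and β that is concentrated on the diagonal set {((y,x),(y',x')) : y = y'}, i.e., γ-almost surely the two conditioning components coincide. Then ∫ ‖x − x'‖² dγ((y,x),(y',x')) ≥ ∫_{ℝ^m} W₂²(α_y, β_y) dμ(y). -/

import Mathlib

/-! A coupling concentrated on the diagonal `{y = y'}` of `μ ⊗ κ` and `μ ⊗ η` is, after forgetting
the duplicate conditioning variable, a measure `μ ⊗ π` on `Ω × (X × Y)`. Disintegrating it and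
comparing marginals with `μ ⊗ κ` and `μ ⊗ η` shows, by uniqueness of disintegrations, that `π y`
is a coupling of `κ y` and `η y` for `μ`-a.e. `y`. The cost of the coupling is then
`∫ ∫ ‖x - x'‖² d(π y) dμ(y)`, and each inner integral dominates `W₂²(κ y, η y)`. -/

open MeasureTheory ProbabilityTheory
open scoped ENNReal

noncomputable section

/-- `ℝ^k` with the Euclidean norm. -/
abbrev Euc (k : ℕ) := EuclideanSpace ℝ (Fin k)

/-- Squared 2-Wasserstein distance (quadratic transport cost) between measures on `ℝ^d`. -/
def W2sq {d : ℕ} (p q : Measure (Euc d)) : ℝ≥0∞ :=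
  ⨅ (γ : Measure (Euc d × Euc d)) (_ : γ.fst = p ∧ γ.snd = q),
    ∫⁻ z, (‖z.1 - z.2‖₊ : ℝ≥0∞) ^ 2 ∂γ

namespace MeasureTheory.Measure

variable {Ω X Y : Type*} [MeasurableSpace Ω] [MeasurableSpace X] [MeasurableSpace Y]

def collapseDiag (w : (Ω × X) × (Ω × Y)) : Ω × (X × Y) := (w.1.1, (w.1.2, w.2.2))

@[fun_prop]
lemma measurable_collapseDiag : Measurable (collapseDiag : (Ω × X) × (Ω × Y) → Ω × (X × Y)) :=
  measurable_fst.fst.prodMk (measurable_fst.snd.prodMk measurable_snd.snd)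

lemma map_collapseDiag_map_fst (γ : Measure ((Ω × X) × (Ω × Y))) :
    (γ.map collapseDiag).map (Prod.map id Prod.fst) = γ.fst := by
  rw [map_map (by fun_prop) measurable_collapseDiag]
  rfl

lemma map_collapseDiag_map_snd {γ : Measure ((Ω × X) × (Ω × Y))}
    (hdiag : ∀ᵐ w ∂γ, w.1.1 = w.2.1) :
    (γ.map collapseDiag).map (Prod.map id Prod.snd) = γ.snd := by
  rw [map_map (by fun_prop) measurable_collapseDiag, Measure.snd]
  exact map_congr (hdiag.mono fun w hw => by simp [collapseDiag, hw])

lemma fst_map_collapseDiag (γ : Measure ((Ω × X) × (Ω × Y))) :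
    (γ.map collapseDiag).fst = γ.fst.fst := by
  rw [Measure.fst, Measure.fst, Measure.fst, map_map measurable_fst measurable_collapseDiag,
    map_map measurable_fst measurable_fst]
  rfl

lemma lintegral_map_collapseDiag (γ : Measure ((Ω × X) × (Ω × Y))) {c : X → Y → ℝ≥0∞}
    (hc : Measurable (Function.uncurry c)) :
    ∫⁻ z, c z.2.1 z.2.2 ∂(γ.map collapseDiag) = ∫⁻ w, c w.1.2 w.2.2 ∂γ :=
  lintegral_map (hc.comp measurable_snd) measurable_collapseDiag

variable [StandardBorelSpace X] [Nonempty X] [StandardBorelSpace Y] [Nonempty Y]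

theorem exists_compProd_eq_map_collapseDiag {μ : Measure Ω} [IsFiniteMeasure μ]
    {κ : Kernel Ω X} {η : Kernel Ω Y} [IsMarkovKernel κ] [IsMarkovKernel η]
    {γ : Measure ((Ω × X) × (Ω × Y))} (hfst : γ.fst = μ ⊗ₘ κ) (hsnd : γ.snd = μ ⊗ₘ η)
    (hdiag : ∀ᵐ w ∂γ, w.1.1 = w.2.1) :
    ∃ π : Kernel Ω (X × Y), IsMarkovKernel π ∧ μ ⊗ₘ π = γ.map collapseDiag ∧
      ∀ᵐ y ∂μ, (π y).fst = κ y ∧ (π y).snd = η y := by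
  set ν := γ.map collapseDiag
  have : IsFiniteMeasure γ := ⟨by rw [← fst_univ, hfst]; exact measure_lt_top _ _⟩
  have hν : μ ⊗ₘ ν.condKernel = ν := by
    conv_rhs => rw [← ν.disintegrate ν.condKernel]
    rw [fst_map_collapseDiag, hfst, fst_compProd]
  refine ⟨ν.condKernel, inferInstance, hν, ?_⟩
  have hκ : ν.condKernel.fst =ᵐ[μ] κ := by
    refine Kernel.ae_eq_of_compProd_eq ?_
    rw [Kernel.fst_eq, compProd_map measurable_fst, hν, map_collapseDiag_map_fst, hfst]
  have hη : ν.condKernel.snd =ᵐ[μ] η := by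
    refine Kernel.ae_eq_of_compProd_eq ?_
    rw [Kernel.snd_eq, compProd_map measurable_snd, hν, map_collapseDiag_map_snd hdiag, hsnd]
  exact hκ.and hη

end MeasureTheory.Measure

lemma W2sq_le_lintegral {d : ℕ} {π : Measure (Euc d × Euc d)} {p q : Measure (Euc d)}
    (hfst : π.fst = p) (hsnd : π.snd = q) :
    W2sq p q ≤ ∫⁻ z, (‖z.1 - z.2‖₊ : ℝ≥0∞) ^ 2 ∂π :=
  iInf₂_le π ⟨hfst, hsnd⟩

theorem diagonal_coupling_cost_lower_bound_general {m d : ℕ}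
    (μ : Measure (Euc m)) [IsProbabilityMeasure μ]
    (α β : Measure (Euc m × Euc d))
    (αk βk : Kernel (Euc m) (Euc d)) [IsMarkovKernel αk] [IsMarkovKernel βk]
    (hαdis : α = μ.compProd αk) (hβdis : β = μ.compProd βk)
    (γ : Measure ((Euc m × Euc d) × (Euc m × Euc d)))
    (hγ : γ.fst = α ∧ γ.snd = β)
    (hdiag : γ {w : (Euc m × Euc d) × (Euc m × Euc d) | w.1.1 ≠ w.2.1} = 0) :
    ∫⁻ y, W2sq (αk y) (βk y) ∂μ ≤
      ∫⁻ w : (Euc m × Euc d) × (Euc m × Euc d), (‖w.1.2 - w.2.2‖₊ : ℝ≥0∞) ^ 2 ∂γ := by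
  subst hαdis hβdis
  obtain ⟨π, _, hπ, hcoupling⟩ :=
    Measure.exists_compProd_eq_map_collapseDiag hγ.1 hγ.2 (ae_iff.2 hdiag)
  have hcost : Measurable fun z : Euc d × Euc d => (‖z.1 - z.2‖₊ : ℝ≥0∞) ^ 2 := by fun_prop
  calc ∫⁻ y, W2sq (αk y) (βk y) ∂μ
      ≤ ∫⁻ y, ∫⁻ z, (‖z.1 - z.2‖₊ : ℝ≥0∞) ^ 2 ∂(π y) ∂μ :=
        lintegral_mono_ae (hcoupling.mono fun y hy => W2sq_le_lintegral hy.1 hy.2)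
    _ = ∫⁻ z, (‖z.2.1 - z.2.2‖₊ : ℝ≥0∞) ^ 2 ∂(μ ⊗ₘ π) :=
        (Measure.lintegral_compProd (hcost.comp measurable_snd)).symm
    _ = _ := by
        rw [hπ]
        exact Measure.lintegral_map_collapseDiag γ (c := fun x x' => (‖x - x'‖₊ : ℝ≥0∞) ^ 2) hcost

/-- Lower bound via conditional optimal transport: a coupling `γ` of `α = μ ⊗ α_•` and
`β = μ ⊗ β_•` which is concentrated on the diagonal `{y = y'}` has next-state transport
cost at least the integrated conditional squared Wasserstein distance:
`∫ ‖x − x'‖² dγ ≥ ∫ W₂²(α_y, β_y) dμ(y)`. -/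
theorem diagonal_coupling_cost_lower_bound {m d : ℕ}
    (μ : Measure (Euc m)) [IsProbabilityMeasure μ]
    (α β : Measure (Euc m × Euc d)) [IsProbabilityMeasure α] [IsProbabilityMeasure β]
    (hα2 : ∫⁻ z, ((‖z.1‖₊ : ℝ≥0∞) ^ 2 + (‖z.2‖₊ : ℝ≥0∞) ^ 2) ∂α < ∞)
    (hβ2 : ∫⁻ z, ((‖z.1‖₊ : ℝ≥0∞) ^ 2 + (‖z.2‖₊ : ℝ≥0∞) ^ 2) ∂β < ∞)
    (hαfst : α.fst = μ) (hβfst : β.fst = μ)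
    (αk βk : Kernel (Euc m) (Euc d)) [IsMarkovKernel αk] [IsMarkovKernel βk]
    (hαdis : α = μ.compProd αk) (hβdis : β = μ.compProd βk)
    (γ : Measure ((Euc m × Euc d) × (Euc m × Euc d)))
    (hγ : γ.fst = α ∧ γ.snd = β)
    (hdiag : γ {w : (Euc m × Euc d) × (Euc m × Euc d) | w.1.1 ≠ w.2.1} = 0) :
    ∫⁻ y, W2sq (αk y) (βk y) ∂μ ≤
      ∫⁻ w : (Euc m × Euc d) × (Euc m × Euc d), (‖w.1.2 - w.2.2‖₊ : ℝ≥0∞) ^ 2 ∂γ :=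
  diagonal_coupling_cost_lower_bound_general μ α β αk βk hαdis hβdis γ hγ hdiag
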